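/- For every (θ,w) ∈ ℝ^d × ℝ^k, the set ĝ(θ,w) = { ∫_{S×U} g(θ,w,z) ν(dz,da) : ν ∈ D(θ,w) } is a nonempty, convex, and compact subset of ℝ^k. -/

import Mathlib

open MeasureTheory Filter Topology Metric Set
open scoped ENNReal NNReal
set_option linter.unusedSectionVars false

section Riesz

private lemma lin_mono {X : Type*} [TopologicalSpace X] (φ : C(X,ℝ) →ₗ[ℝ] ℝ)
    (hpos : ∀ f : C(X,ℝ), (∀ x, 0 ≤ f x) → 0 ≤ φ f) {f g : C(X,ℝ)}
    (h : ∀ x, f x ≤ g x) : φ f ≤ φ g := by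
  have h1 : 0 ≤ φ (g - f) := hpos _ (fun x => by
    simp only [ContinuousMap.sub_apply]; linarith [h x])
  have h2 : φ (g - f) = φ g - φ f := map_sub φ g f
  linarith

variable {X : Type*} [MetricSpace X] [CompactSpace X] [Nonempty X]

/-- continuous bump function approximating the indicator of `K` from above -/
private noncomputable def bumpCM (K : Set X) (n : ℕ) : C(X, ℝ) :=
  ⟨fun x => max 0 (1 - ((n : ℝ) + 1) * infDist x K),
   continuous_const.max (continuous_const.sub
    (continuous_const.mul (continuous_infDist_pt K)))⟩

private lemma bumpCM_apply (K : Set X) (n : ℕ) (x : X) :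
    bumpCM K n x = max 0 (1 - ((n : ℝ) + 1) * infDist x K) := rfl

private lemma bump_nonneg (K : Set X) (n : ℕ) (x : X) : 0 ≤ bumpCM K n x :=
  le_max_left _ _

private lemma bump_le_one (K : Set X) (n : ℕ) (x : X) : bumpCM K n x ≤ 1 := by
  have : (0:ℝ) ≤ ((n:ℝ)+1) * infDist x K :=
    mul_nonneg (by positivity) infDist_nonneg
  rw [bumpCM_apply]
  exact max_le zero_le_one (by linarith)

private lemma bump_of_mem (K : Set X) (n : ℕ) {x : X} (hx : x ∈ K) :
    bumpCM K n x = 1 := by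
  rw [bumpCM_apply, infDist_zero_of_mem hx]
  norm_num

private lemma bump_antitone (K : Set X) {n m : ℕ} (h : n ≤ m) (x : X) :
    bumpCM K m x ≤ bumpCM K n x := by
  rw [bumpCM_apply, bumpCM_apply]
  have hc : ((n:ℝ)) ≤ (m:ℝ) := Nat.cast_le.2 h
  have : ((n:ℝ)+1) * infDist x K ≤ ((m:ℝ)+1) * infDist x K :=
    mul_le_mul_of_nonneg_right (by linarith) infDist_nonneg
  exact max_le_max le_rfl (by linarith)

private lemma bump_mono_set {K₁ K₂ : Set X} (hK : K₁.Nonempty) (h : K₁ ⊆ K₂) (n : ℕ) (x : X) :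
    bumpCM K₁ n x ≤ bumpCM K₂ n x := by
  rw [bumpCM_apply, bumpCM_apply]
  have : infDist x K₂ ≤ infDist x K₁ := infDist_le_infDist_of_subset h hK
  have h2 : ((n:ℝ)+1) * infDist x K₂ ≤ ((n:ℝ)+1) * infDist x K₁ :=
    mul_le_mul_of_nonneg_left this (by positivity)
  exact max_le_max le_rfl (by linarith)

private lemma bump_pos_mem_thickening {K : Set X} (hK : K.Nonempty) {n : ℕ} {δ : ℝ}
    (hδ : 1/((n:ℝ)+1) ≤ δ) {x : X} (h : 0 < bumpCM K n x) : x ∈ thickening δ K := by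
  rw [bumpCM_apply] at h
  have h1 : 0 < 1 - ((n:ℝ)+1) * infDist x K := by
    rcases lt_max_iff.1 h with h' | h'
    · exact absurd h' (lt_irrefl _)
    · exact h'
  have hn : (0:ℝ) < (n:ℝ)+1 := by positivity
  have : infDist x K < 1/((n:ℝ)+1) := by
    rw [lt_div_iff₀ hn, mul_comm]; linarith
  exact (mem_thickening_iff_infDist_lt hK).2 (lt_of_lt_of_le this hδ)

private lemma infDist_union' {s t : Set X} (hs : s.Nonempty) (ht : t.Nonempty) (x : X) :
    infDist x (s ∪ t) = min (infDist x s) (infDist x t) := by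
  rw [infDist, infDist, infDist, EMetric.infEdist_union]
  exact ENNReal.toReal_min (infEdist_ne_top hs) (infEdist_ne_top ht)

private lemma bump_union {K₁ K₂ : Set X} (h₁ : K₁.Nonempty) (h₂ : K₂.Nonempty) (n : ℕ) (x : X) :
    bumpCM (K₁ ∪ K₂) n x = max (bumpCM K₁ n x) (bumpCM K₂ n x) := by
  simp only [bumpCM_apply]
  rw [infDist_union' h₁ h₂]
  have hc : (0:ℝ) ≤ (n:ℝ)+1 := by positivity
  rcases le_total (infDist x K₁) (infDist x K₂) with h | h
  · rw [min_eq_left h]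
    have hm : (0:ℝ) ⊔ (1 - ((n:ℝ)+1) * infDist x K₂) ≤ (0:ℝ) ⊔ (1 - ((n:ℝ)+1) * infDist x K₁) :=
      max_le_max le_rfl (by nlinarith [mul_le_mul_of_nonneg_left h hc])
    exact (max_eq_left hm).symm
  · rw [min_eq_right h]
    have hm : (0:ℝ) ⊔ (1 - ((n:ℝ)+1) * infDist x K₁) ≤ (0:ℝ) ⊔ (1 - ((n:ℝ)+1) * infDist x K₂) :=
      max_le_max le_rfl (by nlinarith [mul_le_mul_of_nonneg_left h hc])
    exact (max_eq_right hm).symm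

variable (φ : C(X,ℝ) →ₗ[ℝ] ℝ)

/-- `lam φ K = inf_n φ (bump K n)` -/
private noncomputable def lam (K : Set X) : ℝ := ⨅ n : ℕ, φ (bumpCM K n)

section lamFacts

variable (hpos : ∀ f : C(X,ℝ), (∀ x, 0 ≤ f x) → 0 ≤ φ f)
include hpos

private lemma bddBelow_bump (K : Set X) :
    BddBelow (Set.range fun n : ℕ => φ (bumpCM K n)) := by
  refine ⟨0, ?_⟩
  rintro r ⟨n, rfl⟩
  exact hpos _ (bump_nonneg K n)

private lemma antitone_bump (K : Set X) :
    Antitone (fun n : ℕ => φ (bumpCM K n)) := fun n m h =>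
  lin_mono φ hpos (fun x => bump_antitone K h x)

private lemma lam_tendsto (K : Set X) :
    Tendsto (fun n : ℕ => φ (bumpCM K n)) atTop (𝓝 (lam φ K)) :=
  tendsto_atTop_ciInf (antitone_bump φ hpos K) (bddBelow_bump φ hpos K)

private lemma lam_le (K : Set X) (n : ℕ) : lam φ K ≤ φ (bumpCM K n) :=
  ciInf_le (bddBelow_bump φ hpos K) n

private lemma lam_nonneg (K : Set X) : 0 ≤ lam φ K :=
  Real.iInf_nonneg (fun n => hpos _ (bump_nonneg K n))

private lemma lam_mono {K₁ K₂ : Set X} (hK : K₁.Nonempty) (h : K₁ ⊆ K₂) :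
    lam φ K₁ ≤ lam φ K₂ :=
  ciInf_mono (bddBelow_bump φ hpos K₁) (fun n => lin_mono φ hpos (bump_mono_set hK h n))

private lemma lam_le_one (hone : φ 1 = 1) (K : Set X) : lam φ K ≤ 1 := by
  refine (lam_le φ hpos K 0).trans ?_
  have := lin_mono φ hpos (f := bumpCM K 0) (g := 1) (fun x => by
    simpa using bump_le_one K 0 x)
  simpa [hone] using this

/-- the key regularity fact: `lam K ≤ φ h` whenever `h ≥ 0` and `h ≥ 1` on `K`. -/
private lemma lam_le_phi {K : Set X} (hKc : IsCompact K) (hKne : K.Nonempty)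
    {h : C(X,ℝ)} (h0 : ∀ x, 0 ≤ h x) (h1 : ∀ x ∈ K, 1 ≤ h x) :
    lam φ K ≤ φ h := by
  have hφh : 0 ≤ φ h := hpos h h0
  refine le_of_forall_pos_le_add (fun ε hε => ?_)
  set ε' : ℝ := ε / (φ h + 1) with hε'
  have hφh1 : (0:ℝ) < φ h + 1 := by linarith
  have hε'pos : 0 < ε' := div_pos hε hφh1
  set G : Set X := {x | 1 < (1 + ε') * h x} with hG
  have hGopen : IsOpen G := isOpen_lt continuous_const (continuous_const.mul h.continuous)
  have hKG : K ⊆ G := fun x hx => by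
    have hx1 := h1 x hx
    show 1 < (1 + ε') * h x
    nlinarith
  obtain ⟨δ, hδpos, hδ⟩ := hKc.exists_thickening_subset_open hGopen hKG
  obtain ⟨N, hN⟩ := exists_nat_one_div_lt hδpos
  have hbump : ∀ x, bumpCM K N x ≤ (1 + ε') * h x := by
    intro x
    rcases lt_or_ge 0 (bumpCM K N x) with hx | hx
    · have hmem : x ∈ thickening δ K :=
        bump_pos_mem_thickening hKne (le_of_lt hN) hx
      have : 1 < (1 + ε') * h x := hδ hmem
      linarith [bump_le_one K N x]
    · have := bump_nonneg K N x
      have h0x := h0 x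
      nlinarith
  have step : φ (bumpCM K N) ≤ (1 + ε') * φ h := by
    have := lin_mono φ hpos (f := bumpCM K N) (g := (1 + ε') • h) (fun x => by
      simpa using hbump x)
    simpa [_root_.map_smul, smul_eq_mul] using this
  have hε'φ : ε' * φ h ≤ ε := by
    rw [hε']
    rw [div_mul_eq_mul_div, div_le_iff₀ hφh1]
    nlinarith
  calc lam φ K ≤ φ (bumpCM K N) := lam_le φ hpos K N
    _ ≤ (1 + ε') * φ h := step
    _ = φ h + ε' * φ h := by ring
    _ ≤ φ h + ε := by linarith

end lamFacts

end Riesz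
section Riesz2

open TopologicalSpace Classical in
/-- the content associated to a positive normalized functional -/
private noncomputable def rContent {X : Type*} [MetricSpace X] [CompactSpace X] [Nonempty X]
    (φ : C(X,ℝ) →ₗ[ℝ] ℝ) (hpos : ∀ f : C(X,ℝ), (∀ x, 0 ≤ f x) → 0 ≤ φ f) :
    MeasureTheory.Content X where
  toFun := fun K => Real.toNNReal (if (K : Set X).Nonempty then lam φ K else 0)
  mono' := by
    intro K₁ K₂ h
    by_cases h₁ : (K₁ : Set X).Nonempty
    · have h₂ : (K₂ : Set X).Nonempty := h₁.mono h
      simp only [h₁, h₂, if_pos]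
      exact Real.toNNReal_le_toNNReal (lam_mono φ hpos h₁ h)
    · simp [h₁]
  sup_le' := by
    intro K₁ K₂
    simp only [TopologicalSpace.Compacts.coe_sup]
    by_cases h₁ : (K₁ : Set X).Nonempty
    · by_cases h₂ : (K₂ : Set X).Nonempty
      · have hUne : ((K₁ : Set X) ∪ K₂).Nonempty := h₁.mono subset_union_left
        simp only [hUne, h₁, h₂, if_pos]
        have key : lam φ ((K₁ : Set X) ∪ K₂) ≤ lam φ K₁ + lam φ K₂ := by
          refine ge_of_tendsto ((lam_tendsto φ hpos (K₁ : Set X)).add (lam_tendsto φ hpos (K₂ : Set X)))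
            (Filter.Eventually.of_forall (fun n => ?_))
          refine (lam_le φ hpos _ n).trans (le_of_le_of_eq
            (lin_mono φ hpos (g := bumpCM (K₁ : Set X) n + bumpCM (K₂ : Set X) n) (fun x => ?_))
            (map_add φ _ _))
          rw [ContinuousMap.add_apply, bump_union h₁ h₂ n x]
          exact max_le (le_add_of_nonneg_right (bump_nonneg _ n x))
            (le_add_of_nonneg_left (bump_nonneg _ n x))
        calc Real.toNNReal (lam φ ((K₁ : Set X) ∪ K₂))
            ≤ Real.toNNReal (lam φ K₁ + lam φ K₂) := Real.toNNReal_le_toNNReal key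
          _ = Real.toNNReal (lam φ K₁) + Real.toNNReal (lam φ K₂) :=
              Real.toNNReal_add (lam_nonneg φ hpos _) (lam_nonneg φ hpos _)
      · have h₂' : (K₂ : Set X) = ∅ := Set.not_nonempty_iff_eq_empty.1 h₂
        simp [h₂', Set.union_empty]
    · have h₁' : (K₁ : Set X) = ∅ := Set.not_nonempty_iff_eq_empty.1 h₁
      simp [h₁', Set.empty_union]
  sup_disjoint' := by
    intro K₁ K₂ hdis _ _
    simp only [TopologicalSpace.Compacts.coe_sup]
    by_cases h₁ : (K₁ : Set X).Nonempty
    · by_cases h₂ : (K₂ : Set X).Nonempty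
      · have hUne : ((K₁ : Set X) ∪ K₂).Nonempty := h₁.mono subset_union_left
        simp only [hUne, h₁, h₂, if_pos]
        obtain ⟨δ, hδpos, hdisj⟩ := hdis.exists_thickenings K₁.2 K₂.2.isClosed
        obtain ⟨N, hN⟩ := exists_nat_one_div_lt hδpos
        have key : ∀ n ≥ N, φ (bumpCM ((K₁ : Set X) ∪ K₂) n) =
            φ (bumpCM (K₁ : Set X) n) + φ (bumpCM (K₂ : Set X) n) := by
          intro n hn
          rw [← map_add φ]
          refine congrArg φ (ContinuousMap.ext (fun x => ?_))
          have hδn : 1/((n:ℝ)+1) ≤ δ := by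
            have h1 : ((N:ℝ)+1) ≤ (n:ℝ)+1 := by
              have := (Nat.cast_le (α := ℝ)).2 hn; linarith
            have h2 : 1/((n:ℝ)+1) ≤ 1/((N:ℝ)+1) :=
              one_div_le_one_div_of_le (by positivity) h1
            linarith
          rw [bump_union h₁ h₂ n x, ContinuousMap.add_apply]
          rcases lt_or_ge 0 (bumpCM (K₁ : Set X) n x) with hx₁ | hx₁
          · have hmem₁ : x ∈ Metric.thickening δ K₁ := bump_pos_mem_thickening h₁ hδn hx₁
            have hx₂ : bumpCM (K₂ : Set X) n x = 0 := by
              by_contra hc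
              have : 0 < bumpCM (K₂ : Set X) n x :=
                lt_of_le_of_ne (bump_nonneg _ n x) (Ne.symm hc)
              exact (Set.disjoint_left.1 hdisj hmem₁) (bump_pos_mem_thickening h₂ hδn this)
            rw [hx₂, add_zero]
            exact max_eq_left (le_of_lt hx₁)
          · have hx₁' : bumpCM (K₁ : Set X) n x = 0 := le_antisymm hx₁ (bump_nonneg _ n x)
            rw [hx₁', zero_add]
            exact max_eq_right (bump_nonneg _ n x)
        have hlam : lam φ ((K₁ : Set X) ∪ K₂) = lam φ K₁ + lam φ K₂ := by
          refine tendsto_nhds_unique (lam_tendsto φ hpos _)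
            (((lam_tendsto φ hpos (K₁ : Set X)).add (lam_tendsto φ hpos (K₂ : Set X))).congr' ?_)
          filter_upwards [Filter.eventually_ge_atTop N] with n hn
          exact (key n hn).symm
        rw [hlam]
        exact Real.toNNReal_add (lam_nonneg φ hpos _) (lam_nonneg φ hpos _)
      · have h₂' : (K₂ : Set X) = ∅ := Set.not_nonempty_iff_eq_empty.1 h₂
        simp [h₂', Set.union_empty]
    · have h₁' : (K₁ : Set X) = ∅ := Set.not_nonempty_iff_eq_empty.1 h₁
      simp [h₁', Set.empty_union]

end Riesz2
section Riesz3

private lemma clamp_sum_le : ∀ (n : ℕ) (s : ℝ), s ≤ n →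
    (∑ j ∈ Finset.range n, min 1 (max 0 (s - (j:ℝ)))) ≤ max s 0 := by
  intro n
  induction n with
  | zero => intro s _; simp
  | succ n ih =>
    intro s hs
    rw [Finset.sum_range_succ]
    rcases le_or_gt s n with h | h
    · have h1 := ih s h
      have hterm : min 1 (max 0 (s - (n:ℝ))) = 0 := by
        have h2 : s - (n:ℝ) ≤ 0 := by linarith
        rw [max_eq_left h2]
        exact min_eq_right zero_le_one
      rw [hterm]; linarith
    · have hsum : ∑ j ∈ Finset.range n, min 1 (max 0 (s - (j:ℝ))) ≤ n := by
        calc ∑ j ∈ Finset.range n, min 1 (max 0 (s - (j:ℝ)))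
            ≤ ∑ _j ∈ Finset.range n, (1:ℝ) := Finset.sum_le_sum (fun j _ => min_le_left _ _)
          _ = n := by simp
      have hterm : min 1 (max 0 (s - (n:ℝ))) ≤ s - n := by
        have h1 : (0:ℝ) ≤ s - n := by linarith
        rw [max_eq_right h1]
        exact min_le_right _ _
      have hs0 : (0:ℝ) ≤ s := le_trans (Nat.cast_nonneg n) (le_of_lt h)
      rw [max_eq_left hs0]
      linarith

private lemma le_clamp_sum : ∀ (n : ℕ) (s : ℝ), s ≤ n →
    s - 1 ≤ ∑ j ∈ Finset.range n, min 1 (max 0 (s - (j:ℝ))) := by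
  intro n
  induction n with
  | zero =>
    intro s hs
    have hs' : s ≤ 0 := by exact_mod_cast hs
    simp only [Finset.range_zero, Finset.sum_empty]
    linarith
  | succ n ih =>
    intro s hs
    have hs' : s ≤ (n:ℝ) + 1 := by exact_mod_cast hs
    rw [Finset.sum_range_succ]
    rcases le_or_gt s n with h | h
    · have h1 := ih s h
      have hterm : 0 ≤ min 1 (max 0 (s - (n:ℝ))) := le_min zero_le_one (le_max_left _ _)
      linarith
    · have hall : ∀ j ∈ Finset.range n, min 1 (max 0 (s - (j:ℝ))) = 1 := by
        intro j hj
        have hj2 : (j:ℝ) + 1 ≤ (n:ℝ) := by exact_mod_cast Finset.mem_range.1 hj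
        have h3 : (1:ℝ) ≤ s - j := by linarith
        exact min_eq_left (le_trans h3 (le_max_right _ _))
      have hsum : ∑ j ∈ Finset.range n, min 1 (max 0 (s - (j:ℝ))) = n := by
        rw [Finset.sum_congr rfl hall]; simp
      have hterm : s - n ≤ min 1 (max 0 (s - (n:ℝ))) :=
        le_min (by linarith [hs']) (le_max_right _ _)
      rw [hsum]; linarith

/-- Riesz-Markov-Kakutani representation theorem for positive normalized functionals
on a compact metric space. -/
private theorem riesz_repr {X : Type*} [MetricSpace X] [CompactSpace X] [Nonempty X]
    [MeasurableSpace X] [BorelSpace X]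
    (φ : C(X,ℝ) →ₗ[ℝ] ℝ) (hpos : ∀ f : C(X,ℝ), (∀ x, 0 ≤ f x) → 0 ≤ φ f)
    (hone : φ 1 = 1) :
    ∃ μ : MeasureTheory.Measure X, MeasureTheory.IsProbabilityMeasure μ ∧
      ∀ f : C(X,ℝ), ∫ x, f x ∂μ = φ f := by
  classical
  set C := rContent φ hpos with hC
  set μ := C.measure with hμ
  have hCval : ∀ K : TopologicalSpace.Compacts X, (K : Set X).Nonempty →
      (C K : ℝ≥0∞) = ENNReal.ofReal (lam φ K) := by
    intro K hne
    show ((Real.toNNReal (if (K : Set X).Nonempty then lam φ K else 0) : ℝ≥0) : ℝ≥0∞) = _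
    rw [if_pos hne]
    rfl
  have hCempty : ∀ K : TopologicalSpace.Compacts X, ¬(K : Set X).Nonempty →
      (C K : ℝ≥0∞) = 0 := by
    intro K hne
    show ((Real.toNNReal (if (K : Set X).Nonempty then lam φ K else 0) : ℝ≥0) : ℝ≥0∞) = 0
    rw [if_neg hne]
    simp
  -- the top compact set has content 1
  have hlamuniv : lam φ (Set.univ : Set X) = 1 := by
    have hb : ∀ n : ℕ, bumpCM (Set.univ : Set X) n = 1 :=
      fun n => ContinuousMap.ext (fun x => bump_of_mem _ n (Set.mem_univ x))
    have : lam φ (Set.univ : Set X) = ⨅ _n : ℕ, φ 1 := by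
      unfold lam; exact iInf_congr (fun n => by rw [hb n])
    rw [this, ciInf_const, hone]
  have hCuniv : (C ⟨Set.univ, isCompact_univ⟩ : ℝ≥0∞) = 1 := by
    rw [hCval ⟨Set.univ, isCompact_univ⟩ (by simp [Set.univ_nonempty])]
    simp [hlamuniv]
  have hprob : MeasureTheory.IsProbabilityMeasure μ := by
    constructor
    have h1 : μ Set.univ = C.outerMeasure Set.univ :=
      MeasureTheory.Content.measure_apply _ MeasurableSet.univ
    rw [h1, C.outerMeasure_of_isOpen Set.univ isOpen_univ]
    refine le_antisymm ?_ ?_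
    · calc C.innerContent ⟨Set.univ, isOpen_univ⟩
          ≤ (C ⟨Set.univ, isCompact_univ⟩ : ℝ≥0∞) :=
            C.innerContent_le _ _ (subset_refl _)
        _ = 1 := hCuniv
    · rw [← hCuniv]
      exact C.le_innerContent _ _ (Set.subset_univ _)
  haveI := hprob
  have hint : ∀ f : C(X,ℝ), MeasureTheory.Integrable f μ := by
    intro f
    have := (BoundedContinuousFunction.mkOfCompact f).integrable μ
    exact this
  -- Lemma B : open sets
  have hBopen : ∀ (G : Set X), IsOpen G → ∀ h : C(X,ℝ), (∀ x, 0 ≤ h x) →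
      (∀ x ∈ G, 1 ≤ h x) → (μ G).toReal ≤ φ h := by
    intro G hG h h0 h1
    have hle : μ G ≤ ENNReal.ofReal (φ h) := by
      rw [MeasureTheory.Content.measure_apply _ hG.measurableSet,
        C.outerMeasure_of_isOpen G hG]
      show (⨆ (K : TopologicalSpace.Compacts X) (_ : (K : Set X) ⊆ G), (C K : ℝ≥0∞))
          ≤ ENNReal.ofReal (φ h)
      refine iSup₂_le (fun K hK => ?_)
      by_cases hne : (K : Set X).Nonempty
      · rw [hCval K hne]
        exact ENNReal.ofReal_le_ofReal
          (lam_le_phi φ hpos K.2 hne h0 (fun x hx => h1 x (hK hx)))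
      · rw [hCempty K hne]; exact zero_le
    exact ENNReal.toReal_le_of_le_ofReal (hpos h h0) hle
  -- Lemma C : compact sets
  have hCcomp : ∀ (K : Set X), IsCompact K → ∀ h : C(X,ℝ), (∀ x, 0 ≤ h x) →
      (∀ x, h x ≤ 1) → (∀ x ∉ K, h x = 0) → φ h ≤ (μ K).toReal := by
    intro K hKc h h0 h1 hsupp
    by_cases hne : K.Nonempty
    · have hφlam : φ h ≤ lam φ K := by
        refine le_ciInf (fun n => lin_mono φ hpos (fun x => ?_))
        by_cases hx : x ∈ K
        · rw [bump_of_mem K n hx]; exact h1 x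
        · rw [hsupp x hx]; exact bump_nonneg K n x
      have h4 : ENNReal.ofReal (lam φ K) ≤ μ K := by
        rw [MeasureTheory.Content.measure_apply _ hKc.isClosed.measurableSet]
        exact le_trans (le_of_eq (hCval ⟨K, hKc⟩ hne).symm)
          (C.le_outerMeasure_compacts ⟨K, hKc⟩)
      calc φ h ≤ lam φ K := hφlam
        _ = (ENNReal.ofReal (lam φ K)).toReal := (ENNReal.toReal_ofReal (lam_nonneg φ hpos K)).symm
        _ ≤ (μ K).toReal := ENNReal.toReal_mono (MeasureTheory.measure_ne_top μ K) h4
    · have hh : h = 0 := ContinuousMap.ext (fun x => hsupp x (fun hx =>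
        hne ⟨x, hx⟩))
      rw [hh, map_zero]
      exact ENNReal.toReal_nonneg
  -- main estimate for 0 ≤ f ≤ 1
  have key01 : ∀ f : C(X,ℝ), (∀ x, 0 ≤ f x) → (∀ x, f x ≤ 1) → φ f = ∫ x, f x ∂μ := by
    intro f hf0 hf1
    have main : ∀ n : ℕ, 0 < n → |φ f - ∫ x, f x ∂μ| ≤ 4 / n := by
      intro n hn
      have hnR : (0:ℝ) < n := by exact_mod_cast hn
      set χ : ℕ → C(X,ℝ) := fun j =>
        ⟨fun x => min 1 (max 0 ((n:ℝ) * f x - (j:ℝ))),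
          continuous_const.min (continuous_const.max
            ((continuous_const.mul (map_continuous f)).sub continuous_const))⟩ with hχ
      have hχa : ∀ j x, χ j x = min 1 (max 0 ((n:ℝ) * f x - (j:ℝ))) := fun j x => rfl
      have hχ0 : ∀ j x, 0 ≤ χ j x := fun j x => le_min zero_le_one (le_max_left _ _)
      have hχ1 : ∀ j x, χ j x ≤ 1 := fun j x => min_le_left _ _
      set a : ℕ → ℝ := fun j => (μ {x : X | (j:ℝ) - 1 < (n:ℝ) * f x}).toReal with ha
      have ha01 : ∀ j, 0 ≤ a j ∧ a j ≤ 1 := by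
        intro j
        refine ⟨ENNReal.toReal_nonneg, ?_⟩
        have h2 := MeasureTheory.prob_le_one (μ := μ) (s := {x : X | (j:ℝ) - 1 < (n:ℝ) * f x})
        have := ENNReal.toReal_mono (by simp) h2
        simpa using this
      have hlayer : ∀ j : ℕ, |φ (χ j) - ∫ x, (χ j) x ∂μ| ≤ a j - a (j+2) := by
        intro j
        set Gj : Set X := {x : X | (j:ℝ) + 1 < (n:ℝ) * f x} with hGj
        have hGopen : IsOpen Gj :=
          isOpen_lt continuous_const (continuous_const.mul (map_continuous f))
        set Kj : Set X := {x : X | (j:ℝ) ≤ (n:ℝ) * f x} with hKj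
        have hKclosed : IsClosed Kj :=
          isClosed_le continuous_const (continuous_const.mul (map_continuous f))
        have hKcomp : IsCompact Kj := hKclosed.isCompact
        have hχG : ∀ x ∈ Gj, 1 ≤ χ j x := by
          intro x hx
          have hx' : (j:ℝ) + 1 < (n:ℝ) * f x := hx
          rw [hχa]
          exact le_min le_rfl (le_trans (by linarith) (le_max_right _ _))
        have hχK : ∀ x ∉ Kj, χ j x = 0 := by
          intro x hx
          have hx' : (n:ℝ) * f x < (j:ℝ) := lt_of_not_ge hx
          rw [hχa, max_eq_left (by linarith), min_eq_right zero_le_one]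
        have b1 : (μ Gj).toReal ≤ φ (χ j) := hBopen Gj hGopen (χ j) (hχ0 j) hχG
        have b2 : φ (χ j) ≤ (μ Kj).toReal := hCcomp Kj hKcomp (χ j) (hχ0 j) (hχ1 j) hχK
        have hindG : MeasureTheory.Integrable (Gj.indicator (fun _ => (1:ℝ))) μ :=
          (MeasureTheory.integrable_const 1).indicator hGopen.measurableSet
        have hindK : MeasureTheory.Integrable (Kj.indicator (fun _ => (1:ℝ))) μ :=
          (MeasureTheory.integrable_const 1).indicator hKclosed.measurableSet
        have b3 : (μ Gj).toReal ≤ ∫ x, (χ j) x ∂μ := by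
          have hptw : ∀ x, Gj.indicator (fun _ => (1:ℝ)) x ≤ (χ j) x := by
            intro x
            by_cases hx : x ∈ Gj
            · rw [Set.indicator_of_mem hx]; exact hχG x hx
            · rw [Set.indicator_of_notMem hx]; exact hχ0 j x
          have hmono := MeasureTheory.integral_mono hindG (hint (χ j)) hptw
          rw [MeasureTheory.integral_indicator_const (1:ℝ) hGopen.measurableSet] at hmono
          simp at hmono; exact hmono
        have b4 : ∫ x, (χ j) x ∂μ ≤ (μ Kj).toReal := by
          have hptw : ∀ x, (χ j) x ≤ Kj.indicator (fun _ => (1:ℝ)) x := by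
            intro x
            by_cases hx : x ∈ Kj
            · rw [Set.indicator_of_mem hx]; exact hχ1 j x
            · rw [Set.indicator_of_notMem hx, hχK x hx]
          have hmono := MeasureTheory.integral_mono (hint (χ j)) hindK hptw
          rw [MeasureTheory.integral_indicator_const (1:ℝ) hKclosed.measurableSet] at hmono
          simp at hmono; exact hmono
        have ha1 : (μ Kj).toReal ≤ a j := by
          refine ENNReal.toReal_mono (MeasureTheory.measure_ne_top μ _) ?_
          refine MeasureTheory.measure_mono (fun x hx => ?_)
          have hx' : (j:ℝ) ≤ (n:ℝ) * f x := hx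
          show (j:ℝ) - 1 < (n:ℝ) * f x
          linarith
        have ha2 : a (j+2) ≤ (μ Gj).toReal := by
          have hseteq : {x : X | ((j+2:ℕ):ℝ) - 1 < (n:ℝ) * f x} = Gj := by
            ext x
            simp only [Set.mem_setOf_eq, hGj]
            constructor <;> intro hh <;> [skip; skip] <;> push_cast at * <;> linarith
          show (μ {x : X | ((j+2:ℕ):ℝ) - 1 < (n:ℝ) * f x}).toReal ≤ (μ Gj).toReal
          rw [hseteq]
        rw [abs_sub_le_iff]
        constructor <;> linarith
      have htel : ∑ j ∈ Finset.range n, (a j - a (j+2)) ≤ 2 := by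
        set a' : ℕ → ℝ := fun i => a (i+1) with ha'
        have he : ∀ j ∈ Finset.range n, a j - a (j+2) =
            (a j - a (j+1)) + (a' j - a' (j+1)) := by
          intro j _
          show a j - a (j+2) = (a j - a (j+1)) + (a (j+1) - a (j+1+1))
          ring
        rw [Finset.sum_congr rfl he, Finset.sum_add_distrib,
          Finset.sum_range_sub' a n, Finset.sum_range_sub' a' n]
        have h0 := ha01 0; have h1 := ha01 1; have h2 := ha01 n; have h3 := ha01 (n+1)
        have e1 : a' 0 = a 1 := rfl
        have e2 : a' n = a (n+1) := rfl
        linarith [h0.2, h1.2, h2.1, h3.1]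
      set Sφ : ℝ := ∑ j ∈ Finset.range n, φ (χ j) with hSφ
      set SI : ℝ := ∑ j ∈ Finset.range n, ∫ x, (χ j) x ∂μ with hSI
      have hdiff : |Sφ - SI| ≤ 2 := by
        rw [hSφ, hSI, ← Finset.sum_sub_distrib]
        exact le_trans (Finset.abs_sum_le_sum_abs _ _)
          (le_trans (Finset.sum_le_sum (fun j _ => hlayer j)) htel)
      set Sf : C(X,ℝ) := ∑ j ∈ Finset.range n, χ j with hSfdef
      have hSfx : ∀ x, Sf x = ∑ j ∈ Finset.range n, (χ j) x := by
        intro x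
        rw [hSfdef]
        exact ContinuousMap.sum_apply _ _ _
      have hφSf : φ Sf = Sφ := by rw [hSfdef, map_sum, hSφ]
      have hiSf : ∫ x, Sf x ∂μ = SI := by
        calc ∫ x, Sf x ∂μ = ∫ x, ∑ j ∈ Finset.range n, (χ j) x ∂μ :=
              MeasureTheory.integral_congr_ae (Filter.Eventually.of_forall hSfx)
          _ = SI := MeasureTheory.integral_finset_sum _ (fun j _ => hint (χ j))
      have hSfup : ∀ x, Sf x ≤ (n:ℝ) * f x := by
        intro x
        rw [hSfx]
        have hcl := clamp_sum_le n ((n:ℝ) * f x) (by nlinarith [hf1 x])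
        rw [max_eq_left (by nlinarith [hf0 x])] at hcl
        calc ∑ j ∈ Finset.range n, (χ j) x
            = ∑ j ∈ Finset.range n, min 1 (max 0 ((n:ℝ) * f x - (j:ℝ))) :=
              Finset.sum_congr rfl (fun j _ => hχa j x)
          _ ≤ (n:ℝ) * f x := hcl
      have hSflow : ∀ x, (n:ℝ) * f x - 1 ≤ Sf x := by
        intro x
        rw [hSfx]
        have hcl := le_clamp_sum n ((n:ℝ) * f x) (by nlinarith [hf1 x])
        calc (n:ℝ) * f x - 1
            ≤ ∑ j ∈ Finset.range n, min 1 (max 0 ((n:ℝ) * f x - (j:ℝ))) := hcl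
          _ = ∑ j ∈ Finset.range n, (χ j) x :=
              (Finset.sum_congr rfl (fun j _ => hχa j x)).symm
      have hb1 : Sφ ≤ (n:ℝ) * φ f := by
        rw [← hφSf]
        have hm := lin_mono φ hpos (f := Sf) (g := (n:ℝ) • f) (fun x => by
          rw [ContinuousMap.smul_apply, smul_eq_mul]; exact hSfup x)
        rwa [_root_.map_smul, smul_eq_mul] at hm
      have hb2 : (n:ℝ) * φ f - 1 ≤ Sφ := by
        rw [← hφSf]
        have hm := lin_mono φ hpos (f := (n:ℝ) • f - 1) (g := Sf) (fun x => by
          rw [ContinuousMap.sub_apply, ContinuousMap.smul_apply, smul_eq_mul,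
            ContinuousMap.one_apply]
          exact hSflow x)
        rwa [map_sub, _root_.map_smul, smul_eq_mul, hone] at hm
      have hi1 : SI ≤ (n:ℝ) * ∫ x, f x ∂μ := by
        rw [← hiSf]
        have hmono := MeasureTheory.integral_mono (hint Sf) ((hint f).const_mul (n:ℝ))
          (fun x => hSfup x)
        rwa [MeasureTheory.integral_const_mul] at hmono
      have hi2 : (n:ℝ) * (∫ x, f x ∂μ) - 1 ≤ SI := by
        rw [← hiSf]
        have hintg : MeasureTheory.Integrable (fun x => (n:ℝ) * f x - 1) μ :=
          ((hint f).const_mul (n:ℝ)).sub (MeasureTheory.integrable_const 1)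
        have hmono := MeasureTheory.integral_mono hintg (hint Sf) (fun x => hSflow x)
        have hsub : ∫ x, ((n:ℝ) * f x - 1) ∂μ = (n:ℝ) * (∫ x, f x ∂μ) - 1 := by
          rw [MeasureTheory.integral_sub ((hint f).const_mul (n:ℝ))
            (MeasureTheory.integrable_const 1), MeasureTheory.integral_const_mul]
          simp
        rwa [hsub] at hmono
      have hcomb : |(n:ℝ) * φ f - (n:ℝ) * (∫ x, f x ∂μ)| ≤ 4 := by
        have d1 : |(n:ℝ) * φ f - Sφ| ≤ 1 := abs_le.2 ⟨by linarith, by linarith⟩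
        have d3 : |SI - (n:ℝ) * ∫ x, f x ∂μ| ≤ 1 := abs_le.2 ⟨by linarith, by linarith⟩
        calc |(n:ℝ) * φ f - (n:ℝ) * ∫ x, f x ∂μ|
            ≤ |(n:ℝ) * φ f - Sφ| + |Sφ - (n:ℝ) * ∫ x, f x ∂μ| := abs_sub_le _ _ _
          _ ≤ |(n:ℝ) * φ f - Sφ| + (|Sφ - SI| + |SI - (n:ℝ) * ∫ x, f x ∂μ|) :=
              add_le_add le_rfl (abs_sub_le _ _ _)
          _ ≤ 4 := by linarith
      have hfin : |φ f - ∫ x, f x ∂μ| * n ≤ 4 := by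
        have heq : |φ f - ∫ x, f x ∂μ| * n = |(n:ℝ) * φ f - (n:ℝ) * (∫ x, f x ∂μ)| := by
          calc |φ f - ∫ x, f x ∂μ| * n = |φ f - ∫ x, f x ∂μ| * |(n:ℝ)| := by
                rw [abs_of_pos hnR]
            _ = |(φ f - ∫ x, f x ∂μ) * (n:ℝ)| := (abs_mul _ _).symm
            _ = |(n:ℝ) * φ f - (n:ℝ) * (∫ x, f x ∂μ)| := congrArg abs (by ring)
        rw [heq]
        exact hcomb
      rw [le_div_iff₀ hnR]
      exact hfin
    have htend : Filter.Tendsto (fun n : ℕ => 4 / (n:ℝ)) Filter.atTop (nhds 0) :=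
      tendsto_const_div_atTop_nhds_zero_nat 4
    have habs0 : |φ f - ∫ x, f x ∂μ| ≤ 0 :=
      ge_of_tendsto htend (by
        filter_upwards [Filter.eventually_gt_atTop 0] with n hn
        exact main n hn)
    have heq0 : φ f - ∫ x, f x ∂μ = 0 :=
      abs_eq_zero.1 (le_antisymm habs0 (abs_nonneg _))
    linarith
  -- general f by affine normalization
  refine ⟨μ, hprob, fun f => ?_⟩
  set c : ℝ := ‖f‖ with hc
  have hcpos : (0:ℝ) < 2*c + 1 := by
    have := norm_nonneg f
    rw [hc]
    linarith
  set g : C(X,ℝ) := (2*c+1)⁻¹ • (f + ContinuousMap.const X c) with hg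
  have hfb : ∀ x, |f x| ≤ c := by
    intro x
    have := f.norm_coe_le_norm x
    rwa [Real.norm_eq_abs] at this
  have hga : ∀ x, g x = (2*c+1)⁻¹ * (f x + c) := fun x => by
    rw [hg]
    simp only [ContinuousMap.smul_apply, ContinuousMap.add_apply,
      ContinuousMap.const_apply, smul_eq_mul]
  have hg0 : ∀ x, 0 ≤ g x := by
    intro x
    rw [hga]
    have := (abs_le.1 (hfb x)).1
    exact mul_nonneg (inv_nonneg.2 (le_of_lt hcpos)) (by linarith)
  have hg1 : ∀ x, g x ≤ 1 := by
    intro x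
    rw [hga]
    have := (abs_le.1 (hfb x)).2
    calc (2*c+1)⁻¹ * (f x + c) ≤ (2*c+1)⁻¹ * (2*c+1) :=
          mul_le_mul_of_nonneg_left (by linarith) (inv_nonneg.2 (le_of_lt hcpos))
      _ = 1 := inv_mul_cancel₀ (ne_of_gt hcpos)
  have hkey := key01 g hg0 hg1
  have hconst : φ (ContinuousMap.const X c) = c := by
    have h1 : ContinuousMap.const X c = c • (1 : C(X,ℝ)) :=
      ContinuousMap.ext (fun x => by simp)
    rw [h1, _root_.map_smul, smul_eq_mul, hone, mul_one]
  have hφg : φ g = (2*c+1)⁻¹ * (φ f + c) := by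
    rw [hg, _root_.map_smul, map_add, hconst, smul_eq_mul]
  have hIg : ∫ x, g x ∂μ = (2*c+1)⁻¹ * ((∫ x, f x ∂μ) + c) := by
    calc ∫ x, g x ∂μ = ∫ x, (2*c+1)⁻¹ * (f x + c) ∂μ :=
          MeasureTheory.integral_congr_ae (Filter.Eventually.of_forall hga)
      _ = (2*c+1)⁻¹ * ∫ x, (f x + c) ∂μ := MeasureTheory.integral_const_mul _ _
      _ = (2*c+1)⁻¹ * ((∫ x, f x ∂μ) + c) := by
          rw [MeasureTheory.integral_add (hint f) (MeasureTheory.integrable_const c),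
            MeasureTheory.integral_const, MeasureTheory.probReal_univ]
          simp
  rw [hφg, hIg] at hkey
  have hcancel := mul_left_cancel₀ (inv_ne_zero (ne_of_gt hcpos)) hkey
  linarith

end Riesz3
section FixedPoint
open BoundedContinuousFunction

private lemma cont_integral {Y : Type*} [MeasurableSpace Y] [TopologicalSpace Y]
    [OpensMeasurableSpace Y] (f : Y →ᵇ ℝ) :
    Continuous fun ν : MeasureTheory.ProbabilityMeasure Y =>
      ∫ y, f y ∂(ν : MeasureTheory.Measure Y) := by
  rw [continuous_iff_continuousAt]
  intro ν
  exact (MeasureTheory.ProbabilityMeasure.tendsto_iff_forall_integral_tendsto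
    (μs := id) (μ := ν) (F := 𝓝 ν)).1 tendsto_id f

private lemma pos_bound {X : Type*} [TopologicalSpace X] [CompactSpace X]
    (ψ : C(X,ℝ) →L[ℝ] ℝ)
    (hpos : ∀ f : C(X,ℝ), (∀ x, 0 ≤ f x) → 0 ≤ ψ f) (hone : ψ 1 = 1) (f : C(X,ℝ)) :
    |ψ f| ≤ ‖f‖ := by
  have hm : ∀ g h : C(X,ℝ), (∀ x, g x ≤ h x) → ψ g ≤ ψ h := by
    intro g h hgh
    exact lin_mono (ψ : C(X,ℝ) →ₗ[ℝ] ℝ) (fun f hf => hpos f hf) hgh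
  have hb : ∀ x : X, |f x| ≤ ‖f‖ := fun x => by
    have := f.norm_coe_le_norm x
    rwa [Real.norm_eq_abs] at this
  have hcst : ψ (ContinuousMap.const X ‖f‖) = ‖f‖ := by
    have h1 : ContinuousMap.const X ‖f‖ = ‖f‖ • (1 : C(X,ℝ)) :=
      ContinuousMap.ext (fun x => by simp)
    rw [h1, _root_.map_smul, smul_eq_mul, hone, mul_one]
  rw [abs_le]
  constructor
  · have := hm (ContinuousMap.const X (-‖f‖)) f (fun x => by
      simp only [ContinuousMap.const_apply]
      linarith [(abs_le.1 (hb x)).1])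
    have hcst' : ψ (ContinuousMap.const X (-‖f‖)) = -‖f‖ := by
      have h1 : ContinuousMap.const X (-‖f‖) = (-‖f‖) • (1 : C(X,ℝ)) :=
        ContinuousMap.ext (fun x => by simp)
      rw [h1, _root_.map_smul, smul_eq_mul, hone, mul_one]
    linarith
  · have := hm f (ContinuousMap.const X ‖f‖) (fun x => by
      simp only [ContinuousMap.const_apply]
      linarith [(abs_le.1 (hb x)).2])
    linarith

private theorem exists_invariant_functional {Y : Type*} [MetricSpace Y] [CompactSpace Y]
    [Nonempty Y] (P : C(Y,ℝ) →L[ℝ] C(Y,ℝ))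
    (hPpos : ∀ f : C(Y,ℝ), (∀ x, 0 ≤ f x) → ∀ x, 0 ≤ P f x)
    (hPone : P 1 = 1) :
    ∃ ψ : WeakDual ℝ C(Y,ℝ), (∀ f : C(Y,ℝ), (∀ x, 0 ≤ f x) → 0 ≤ ψ f) ∧ ψ 1 = 1 ∧
      ∀ f, ψ (P f) = ψ f := by
  classical
  set y0 : Y := Classical.arbitrary Y with hy0
  set ψ0 : WeakDual ℝ C(Y,ℝ) := (ContinuousMap.evalCLM ℝ y0 : C(Y,ℝ) →L[ℝ] ℝ) with hψ0
  set T : WeakDual ℝ C(Y,ℝ) → WeakDual ℝ C(Y,ℝ) :=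
    fun ψ => ((ψ : C(Y,ℝ) →L[ℝ] ℝ).comp P : C(Y,ℝ) →L[ℝ] ℝ) with hT
  have hTapp : ∀ (ψ : WeakDual ℝ C(Y,ℝ)) (f : C(Y,ℝ)), T ψ f = ψ (P f) := fun _ _ => rfl
  set u : ℕ → WeakDual ℝ C(Y,ℝ) := fun j => T^[j] ψ0 with hu
  set K0 : Set (WeakDual ℝ C(Y,ℝ)) :=
    {ψ | (∀ f : C(Y,ℝ), (∀ x, 0 ≤ f x) → 0 ≤ ψ f) ∧ ψ 1 = 1} with hK0
  have hu0 : ∀ j, u j ∈ K0 := by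
    intro j
    induction j with
    | zero =>
      constructor
      · intro f hf
        exact hf y0
      · rfl
    | succ j ih =>
      have hstep : u (j+1) = T (u j) := Function.iterate_succ_apply' T j ψ0
      constructor
      · intro f hf
        rw [hstep, hTapp]
        exact ih.1 (P f) (hPpos f hf)
      · rw [hstep, hTapp, hPone]
        exact ih.2
  set v : ℕ → WeakDual ℝ C(Y,ℝ) :=
    fun m => (((m:ℝ)+1))⁻¹ • ∑ j ∈ Finset.range (m+1), u j with hv
  have hva : ∀ (m : ℕ) (f : C(Y,ℝ)), v m f = (((m:ℝ)+1))⁻¹ * ∑ j ∈ Finset.range (m+1), u j f := by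
    intro m f
    show ((((m:ℝ)+1))⁻¹ • ∑ j ∈ Finset.range (m+1), u j) f = _
    rw [← WeakDual.toStrongDual_apply, map_smul, map_sum, ContinuousLinearMap.smul_apply,
      ContinuousLinearMap.sum_apply, smul_eq_mul]
    rfl
  have hm1pos : ∀ m : ℕ, (0:ℝ) < (m:ℝ)+1 := fun m => by positivity
  have hvK : ∀ m, v m ∈ K0 := by
    intro m
    constructor
    · intro f hf
      rw [hva]
      exact mul_nonneg (inv_nonneg.2 (le_of_lt (hm1pos m)))
        (Finset.sum_nonneg (fun j _ => (hu0 j).1 f hf))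
    · rw [hva]
      have : ∀ j ∈ Finset.range (m+1), u j (1 : C(Y,ℝ)) = 1 := fun j _ => (hu0 j).2
      rw [Finset.sum_congr rfl this]
      simp [Finset.sum_const]
      rw [inv_mul_cancel₀ (ne_of_gt (hm1pos m))]
  have hK0closed : IsClosed K0 := by
    have h1 : IsClosed {ψ : WeakDual ℝ C(Y,ℝ) | ∀ f : C(Y,ℝ), (∀ x, 0 ≤ f x) → 0 ≤ ψ f} := by
      have heq : {ψ : WeakDual ℝ C(Y,ℝ) | ∀ f : C(Y,ℝ), (∀ x, 0 ≤ f x) → 0 ≤ ψ f}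
          = ⋂ (f : C(Y,ℝ)), ⋂ (_ : ∀ x, 0 ≤ f x), {ψ : WeakDual ℝ C(Y,ℝ) | 0 ≤ ψ f} := by
        ext ψ
        simp [Set.mem_iInter]
      rw [heq]
      exact isClosed_iInter (fun f => isClosed_iInter (fun _ =>
        isClosed_le continuous_const (WeakDual.eval_continuous f)))
    have h2 : IsClosed {ψ : WeakDual ℝ C(Y,ℝ) | ψ 1 = 1} :=
      isClosed_eq (WeakDual.eval_continuous 1) continuous_const
    exact h1.inter h2
  have hK0sub : K0 ⊆ ⇑WeakDual.toStrongDual ⁻¹' Metric.closedBall 0 1 := by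
    intro ψ hψ
    simp only [Set.mem_preimage, Metric.mem_closedBall, dist_zero_right]
    refine ContinuousLinearMap.opNorm_le_bound _ zero_le_one (fun f => ?_)
    rw [one_mul]
    have := pos_bound (ψ : C(Y,ℝ) →L[ℝ] ℝ) hψ.1 hψ.2 f
    rw [add_zero, ContinuousLinearMap.neg_apply, Real.norm_eq_abs, abs_neg]
    exact this
  have hK0cpt : IsCompact K0 :=
    IsCompact.of_isClosed_subset (WeakDual.isCompact_closedBall (x' := 0) (r := 1)) hK0closed hK0sub
  have hle : Filter.map v Filter.atTop ≤ Filter.principal K0 :=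
    Filter.le_principal_iff.2 (Filter.mem_map.2 (Filter.Eventually.of_forall hvK))
  obtain ⟨ψ, hψK, hcl⟩ := hK0cpt.exists_clusterPt hle
  refine ⟨ψ, hψK.1, hψK.2, fun f => ?_⟩
  set h : WeakDual ℝ C(Y,ℝ) → ℝ := fun ξ => ξ (P f) - ξ f with hh
  have hhcont : Continuous h :=
    (WeakDual.eval_continuous (P f)).sub (WeakDual.eval_continuous f)
  have hMCP : MapClusterPt ψ Filter.atTop v := hcl
  have hMCP2 : MapClusterPt (h ψ) Filter.atTop (h ∘ v) :=
    hMCP.continuousAt_comp hhcont.continuousAt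
  have hval : ∀ m, (h ∘ v) m = (((m:ℝ)+1))⁻¹ * (u (m+1) f - u 0 f) := by
    intro m
    show v m (P f) - v m f = _
    rw [hva, hva, ← mul_sub, ← Finset.sum_sub_distrib]
    congr 1
    have hterm : ∀ j ∈ Finset.range (m+1), u j (P f) - u j f
        = (fun i => u i f) (j+1) - (fun i => u i f) j := by
      intro j _
      have : u (j+1) = T (u j) := Function.iterate_succ_apply' T j ψ0
      show u j (P f) - u j f = u (j+1) f - u j f
      rw [this, hTapp]
    rw [Finset.sum_congr rfl hterm, Finset.sum_range_sub (fun i => u i f)]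
  have hbound : ∀ m, |(h ∘ v) m| ≤ (2 * ‖f‖) / ((m:ℝ)+1) := by
    intro m
    rw [hval, abs_mul, abs_inv, abs_of_pos (hm1pos m)]
    rw [div_eq_inv_mul]
    refine mul_le_mul_of_nonneg_left ?_ (inv_nonneg.2 (le_of_lt (hm1pos m)))
    have b1 : |u (m+1) f| ≤ ‖f‖ := pos_bound (u (m+1) : C(Y,ℝ) →L[ℝ] ℝ) (hu0 (m+1)).1 (hu0 (m+1)).2 f
    have b2 : |u 0 f| ≤ ‖f‖ := pos_bound (u 0 : C(Y,ℝ) →L[ℝ] ℝ) (hu0 0).1 (hu0 0).2 f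
    rw [abs_le] at b1 b2
    exact abs_le.2 ⟨by linarith [b1.1, b2.2], by linarith [b1.2, b2.1]⟩
  have htend0 : Filter.Tendsto (fun m : ℕ => (2 * ‖f‖) / ((m:ℝ)+1)) Filter.atTop (𝓝 0) := by
    have h1 := tendsto_const_div_atTop_nhds_zero_nat (2 * ‖f‖)
    have h2 : Filter.Tendsto (fun m : ℕ => m + 1) Filter.atTop Filter.atTop :=
      Filter.tendsto_add_atTop_nat 1
    have h3 := h1.comp h2
    refine h3.congr (fun m => ?_)
    simp only [Function.comp_apply]
    push_cast
    ring_nf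
  have hvanish : Filter.Tendsto (h ∘ v) Filter.atTop (𝓝 0) :=
    squeeze_zero_norm (fun m => by rw [Real.norm_eq_abs]; exact hbound m) htend0
  have hcp : ClusterPt (h ψ) (Filter.map (h ∘ v) Filter.atTop) := hMCP2
  have hψ0eq : h ψ = 0 := eq_of_nhds_neBot (hcp.mono hvanish)
  have : ψ (P f) - ψ f = 0 := hψ0eq
  linarith

end FixedPoint
set_option maxHeartbeats 2000000

open BoundedContinuousFunction in
/-- For every (θ,w), the set
ĝ(θ,w) = { ∫_{S×U} g(θ,w,z) ν(dz,da) : ν ∈ D(θ,w) } is a nonempty, convex and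
compact subset of ℝ^k. -/
theorem stmt_5 {S U : Type*} [MetricSpace S] [CompactSpace S] [Nonempty S]
    [MeasurableSpace S] [BorelSpace S]
    [MetricSpace U] [CompactSpace U] [Nonempty U] [MeasurableSpace U] [BorelSpace U]
    {d k : ℕ}
    (p : S × U × EuclideanSpace ℝ (Fin d) × EuclideanSpace ℝ (Fin k) → ProbabilityMeasure S)
    (hp : Continuous p)
    (g : EuclideanSpace ℝ (Fin d) → EuclideanSpace ℝ (Fin k) → S → EuclideanSpace ℝ (Fin k))
    (hg : Continuous fun x : EuclideanSpace ℝ (Fin d) × EuclideanSpace ℝ (Fin k) × S =>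
      g x.1 x.2.1 x.2.2)
    (L : ℝ)
    (hL : ∀ (z : S) (θ θ' : EuclideanSpace ℝ (Fin d)) (w w' : EuclideanSpace ℝ (Fin k)),
      ‖g θ w z - g θ' w' z‖ ≤ L * (‖θ - θ'‖ + ‖w - w'‖))
    (θ : EuclideanSpace ℝ (Fin d)) (w : EuclideanSpace ℝ (Fin k)) :
    let Dset : Set (ProbabilityMeasure (S × U)) :=
      {Ψ | ∀ f : C(S, ℝ),
        ∫ za, f za.1 ∂(Ψ : Measure (S × U)) =
          ∫ za, (∫ y, f y ∂(p (za.1, za.2, θ, w) : Measure S)) ∂(Ψ : Measure (S × U))}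
    let ghat : Set (EuclideanSpace ℝ (Fin k)) :=
      (fun ν : ProbabilityMeasure (S × U) => ∫ za, g θ w za.1 ∂(ν : Measure (S × U))) '' Dset
    ghat.Nonempty ∧ Convex ℝ ghat ∧ IsCompact ghat := by
  intro Dset ghat
  classical
  -- continuity of `g θ w`
  have hgc : Continuous fun z : S => g θ w z := by
    have : Continuous fun z : S =>
        ((θ, (w, z)) : EuclideanSpace ℝ (Fin d) × EuclideanSpace ℝ (Fin k) × S) := by
      fun_prop
    exact hg.comp this
  -- the test functions
  set gi : Fin k → C(S × U, ℝ) := fun i =>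
    ⟨fun za => g θ w za.1 i,
      (EuclideanSpace.proj (𝕜 := ℝ) i).continuous.comp (hgc.comp continuous_fst)⟩ with hgi
  -- the `P` operator on `C(S×U)`
  have hPXc : ∀ f : C(S,ℝ), Continuous
      (fun za : S × U => ∫ y, f y ∂(p (za.1, za.2, θ, w) : Measure S)) := by
    intro f
    have h1 : Continuous fun za : S × U => p (za.1, za.2, θ, w) := by
      exact hp.comp (by fun_prop)
    have := (cont_integral (mkOfCompact f)).comp h1
    exact this
  set PX : C(S,ℝ) → C(S × U, ℝ) := fun f =>
    ⟨fun za => ∫ y, f y ∂(p (za.1, za.2, θ, w) : Measure S), hPXc f⟩ with hPX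
  set cf : C(S,ℝ) → C(S × U, ℝ) := fun f => f.comp ⟨Prod.fst, continuous_fst⟩ with hcf
  -- integrability facts
  have intCM : ∀ (ν : ProbabilityMeasure (S × U)) (F : C(S × U, ℝ)),
      Integrable F (ν : Measure (S × U)) := by
    intro ν F
    have := (mkOfCompact F).integrable (ν : Measure (S × U))
    exact this
  have intG : ∀ ν : ProbabilityMeasure (S × U),
      Integrable (fun za : S × U => g θ w za.1) (ν : Measure (S × U)) := by
    intro ν
    have := (mkOfCompact ⟨fun za : S × U => g θ w za.1,
      hgc.comp continuous_fst⟩).integrable (ν : Measure (S × U))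
    exact this
  have coords : ∀ (ν : ProbabilityMeasure (S × U)) (i : Fin k),
      (∫ za, g θ w za.1 ∂(ν : Measure (S × U))) i
        = ∫ za, gi i za ∂(ν : Measure (S × U)) := by
    intro ν i
    have := (EuclideanSpace.proj (𝕜 := ℝ) i).integral_comp_comm (intG ν)
    exact this.symm
  -- integration functionals
  set Φ : ProbabilityMeasure (S × U) → WeakDual ℝ C(S × U, ℝ) := fun ν =>
    LinearMap.mkContinuous
      { toFun := fun F => ∫ za, F za ∂(ν : Measure (S × U))
        map_add' := fun F G => by
          simp only [ContinuousMap.add_apply]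
          exact integral_add (intCM ν F) (intCM ν G)
        map_smul' := fun c F => by
          simp only [ContinuousMap.smul_apply, smul_eq_mul, RingHom.id_apply]
          exact integral_const_mul c _ }
      1 (fun F => by
        rw [one_mul]
        have := norm_integral_le_of_norm_le_const (μ := (ν : Measure (S × U)))
          (f := fun za => F za) (C := ‖F‖)
          (Filter.Eventually.of_forall (fun za => F.norm_coe_le_norm za))
        simpa using this) with hΦ
  have hΦapp : ∀ (ν : ProbabilityMeasure (S × U)) (F : C(S × U, ℝ)),
      Φ ν F = ∫ za, F za ∂(ν : Measure (S × U)) := fun ν F => rfl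
  -- the functional version of Dset
  set Kset : Set (WeakDual ℝ C(S × U, ℝ)) :=
    {φ | (∀ F : C(S × U, ℝ), (∀ x, 0 ≤ F x) → 0 ≤ φ F) ∧ φ 1 = 1 ∧
      ∀ f : C(S,ℝ), φ (cf f) = φ (PX f)} with hKset
  have hKclosed : IsClosed Kset := by
    have h1 : IsClosed {φ : WeakDual ℝ C(S × U, ℝ) |
        ∀ F : C(S × U, ℝ), (∀ x, 0 ≤ F x) → 0 ≤ φ F} := by
      have heq : {φ : WeakDual ℝ C(S × U, ℝ) | ∀ F : C(S × U, ℝ), (∀ x, 0 ≤ F x) → 0 ≤ φ F}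
          = ⋂ (F : C(S × U, ℝ)), ⋂ (_ : ∀ x, 0 ≤ F x),
            {φ : WeakDual ℝ C(S × U, ℝ) | 0 ≤ φ F} := by
        ext φ
        simp [Set.mem_iInter]
      rw [heq]
      exact isClosed_iInter (fun F => isClosed_iInter (fun _ =>
        isClosed_le continuous_const (WeakDual.eval_continuous F)))
    have h2 : IsClosed {φ : WeakDual ℝ C(S × U, ℝ) | φ 1 = 1} :=
      isClosed_eq (WeakDual.eval_continuous 1) continuous_const
    have h3 : IsClosed {φ : WeakDual ℝ C(S × U, ℝ) | ∀ f : C(S,ℝ), φ (cf f) = φ (PX f)} := by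
      have heq : {φ : WeakDual ℝ C(S × U, ℝ) | ∀ f : C(S,ℝ), φ (cf f) = φ (PX f)}
          = ⋂ (f : C(S,ℝ)), {φ : WeakDual ℝ C(S × U, ℝ) | φ (cf f) = φ (PX f)} := by
        ext φ
        simp [Set.mem_iInter]
      rw [heq]
      exact isClosed_iInter (fun f =>
        isClosed_eq (WeakDual.eval_continuous (cf f)) (WeakDual.eval_continuous (PX f)))
    exact h1.inter (h2.inter h3)
  have hKsub : Kset ⊆ ⇑WeakDual.toStrongDual ⁻¹' Metric.closedBall 0 1 := by
    intro φ hφ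
    simp only [Set.mem_preimage, Metric.mem_closedBall, dist_zero_right]
    refine ContinuousLinearMap.opNorm_le_bound _ zero_le_one (fun F => ?_)
    rw [one_mul]
    have := pos_bound (φ : C(S × U, ℝ) →L[ℝ] ℝ) hφ.1 hφ.2.1 F
    rw [add_zero, ContinuousLinearMap.neg_apply, Real.norm_eq_abs, abs_neg]
    exact this
  have hKcpt : IsCompact Kset :=
    IsCompact.of_isClosed_subset (WeakDual.isCompact_closedBall (x' := 0) (r := 1)) hKclosed hKsub
  -- the evaluation map into ℝ^k
  set Gm : WeakDual ℝ C(S × U, ℝ) → EuclideanSpace ℝ (Fin k) := fun φ =>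
    (EuclideanSpace.equiv (Fin k) ℝ).symm (fun i => φ (gi i)) with hGm
  have hGapply : ∀ (φ : WeakDual ℝ C(S × U, ℝ)) (i : Fin k), Gm φ i = φ (gi i) :=
    fun φ i => rfl
  have hGcont : Continuous Gm :=
    (EuclideanSpace.equiv (Fin k) ℝ).symm.continuous.comp
      (continuous_pi (fun i => WeakDual.eval_continuous (gi i)))
  -- membership of integration functionals
  have hΦmem : ∀ ν ∈ Dset, Φ ν ∈ Kset := by
    intro ν hν
    refine ⟨?_, ?_, ?_⟩
    · intro F hF
      rw [hΦapp]
      exact integral_nonneg (fun za => hF za)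
    · rw [hΦapp]
      simp only [ContinuousMap.one_apply]
      simp [measure_univ]
    · intro f
      rw [hΦapp, hΦapp]
      exact hν f
  -- surjectivity via Riesz representation
  have hsurj : ∀ φ ∈ Kset, ∃ ν : ProbabilityMeasure (S × U), ν ∈ Dset ∧
      ∀ F : C(S × U, ℝ), ∫ za, F za ∂(ν : Measure (S × U)) = φ F := by
    intro φ hφ
    obtain ⟨μm, hμprob, hrepr⟩ := riesz_repr
      ((φ : C(S × U, ℝ) →L[ℝ] ℝ) : C(S × U, ℝ) →ₗ[ℝ] ℝ) hφ.1 hφ.2.1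
    refine ⟨⟨μm, hμprob⟩, ?_, fun F => hrepr F⟩
    intro f
    have h1 : ∫ za, f za.1 ∂μm = φ (cf f) := hrepr (cf f)
    have h2 : ∫ za, (∫ y, f y ∂(p (za.1, za.2, θ, w) : Measure S)) ∂μm = φ (PX f) :=
      hrepr (PX f)
    show ∫ za, f za.1 ∂μm = ∫ za, (∫ y, f y ∂(p (za.1, za.2, θ, w) : Measure S)) ∂μm
    rw [h1, h2, hφ.2.2 f]
  -- the key identification
  have hset : ghat = Gm '' Kset := by
    ext x
    constructor
    · rintro ⟨ν, hν, rfl⟩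
      refine ⟨Φ ν, hΦmem ν hν, ?_⟩
      refine PiLp.ext (fun i => ?_)
      exact (coords ν i).symm
    · rintro ⟨φ, hφ, rfl⟩
      obtain ⟨ν, hνD, hνval⟩ := hsurj φ hφ
      refine ⟨ν, hνD, ?_⟩
      refine PiLp.ext (fun i => ?_)
      exact (coords ν i).trans (hνval (gi i))
  -- nonemptiness via the invariant functional
  set a₀ : U := Classical.arbitrary U with ha₀
  have hP0c : ∀ f : C(S,ℝ), Continuous
      (fun z : S => ∫ y, f y ∂(p (z, a₀, θ, w) : Measure S)) := by
    intro f
    have h1 : Continuous fun z : S => p (z, a₀, θ, w) := hp.comp (by fun_prop)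
    have := (cont_integral (mkOfCompact f)).comp h1
    exact this
  have intS : ∀ (f : C(S,ℝ)) (m : Measure S) [IsProbabilityMeasure m], Integrable f m := by
    intro f m hm
    have := (mkOfCompact f).integrable m
    exact this
  set P0 : C(S,ℝ) →L[ℝ] C(S,ℝ) :=
    LinearMap.mkContinuous
      { toFun := fun f => ⟨fun z => ∫ y, f y ∂(p (z, a₀, θ, w) : Measure S), hP0c f⟩
        map_add' := fun f f' => ContinuousMap.ext (fun z => by
          simp only [ContinuousMap.add_apply, ContinuousMap.coe_mk]
          exact integral_add (intS f _) (intS f' _))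
        map_smul' := fun c f => ContinuousMap.ext (fun z => by
          simp only [ContinuousMap.smul_apply, smul_eq_mul, RingHom.id_apply,
            ContinuousMap.coe_mk]
          exact integral_const_mul c _) }
      1 (fun f => by
        rw [one_mul]
        refine (ContinuousMap.norm_le _ (norm_nonneg f)).2 (fun z => ?_)
        have := norm_integral_le_of_norm_le_const (μ := (p (z, a₀, θ, w) : Measure S))
          (f := fun y => f y) (C := ‖f‖)
          (Filter.Eventually.of_forall (fun y => f.norm_coe_le_norm y))
        simpa using this) with hP0
  have hP0app : ∀ (f : C(S,ℝ)) (z : S),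
      P0 f z = ∫ y, f y ∂(p (z, a₀, θ, w) : Measure S) := fun f z => rfl
  have hP0pos : ∀ f : C(S,ℝ), (∀ x, 0 ≤ f x) → ∀ z, 0 ≤ P0 f z := by
    intro f hf z
    rw [hP0app]
    exact integral_nonneg (fun y => hf y)
  have hP0one : P0 1 = 1 := by
    refine ContinuousMap.ext (fun z => ?_)
    rw [hP0app]
    simp only [ContinuousMap.one_apply]
    simp [measure_univ]
  obtain ⟨ψs, hψpos, hψone, hψinv⟩ := exists_invariant_functional P0 hP0pos hP0one
  -- restriction operator
  set emb : C(S, S × U) := ⟨fun z => (z, a₀), by fun_prop⟩ with hemb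
  set R : C(S × U, ℝ) →L[ℝ] C(S, ℝ) :=
    LinearMap.mkContinuous
      { toFun := fun F => F.comp emb
        map_add' := fun F G => rfl
        map_smul' := fun c F => rfl }
      1 (fun F => by
        rw [one_mul]
        refine (ContinuousMap.norm_le _ (norm_nonneg F)).2 (fun z => ?_)
        exact F.norm_coe_le_norm (z, a₀)) with hR
  have hRapp : ∀ (F : C(S × U, ℝ)) (z : S), R F z = F (z, a₀) := fun F z => rfl
  set φs : WeakDual ℝ C(S × U, ℝ) := ((ψs : C(S,ℝ) →L[ℝ] ℝ).comp R : C(S × U, ℝ) →L[ℝ] ℝ)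
    with hφs
  have hφsapp : ∀ F : C(S × U, ℝ), φs F = ψs (R F) := fun F => rfl
  have hφsK : φs ∈ Kset := by
    refine ⟨?_, ?_, ?_⟩
    · intro F hF
      rw [hφsapp]
      exact hψpos (R F) (fun z => by rw [hRapp]; exact hF (z, a₀))
    · rw [hφsapp]
      have h1 : R (1 : C(S × U, ℝ)) = 1 := ContinuousMap.ext (fun z => rfl)
      rw [h1, hψone]
    · intro f
      rw [hφsapp, hφsapp]
      have h1 : R (cf f) = f := ContinuousMap.ext (fun z => rfl)
      have h2 : R (PX f) = P0 f := ContinuousMap.ext (fun z => rfl)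
      rw [h1, h2, hψinv f]
  refine ⟨?_, ?_, ?_⟩
  · rw [hset]
    exact ⟨Gm φs, Set.mem_image_of_mem _ hφsK⟩
  · rw [hset]
    rintro x ⟨φ, hφ, rfl⟩ y ⟨ψ, hψ, rfl⟩ t1 t2 ht1 ht2 hsum
    refine ⟨t1 • φ + t2 • ψ, ⟨?_, ?_, ?_⟩, ?_⟩
    · intro F hF
      have : (t1 • φ + t2 • ψ) F = t1 * φ F + t2 * ψ F := rfl
      rw [this]
      exact add_nonneg (mul_nonneg ht1 (hφ.1 F hF)) (mul_nonneg ht2 (hψ.1 F hF))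
    · have : (t1 • φ + t2 • ψ) (1 : C(S × U, ℝ)) = t1 * φ 1 + t2 * ψ 1 := rfl
      rw [this, hφ.2.1, hψ.2.1]
      simpa using hsum
    · intro f
      have e1 : (t1 • φ + t2 • ψ) (cf f) = t1 * φ (cf f) + t2 * ψ (cf f) := rfl
      have e2 : (t1 • φ + t2 • ψ) (PX f) = t1 * φ (PX f) + t2 * ψ (PX f) := rfl
      rw [e1, e2, hφ.2.2 f, hψ.2.2 f]
    · refine PiLp.ext (fun i => ?_)
      have e1 : Gm (t1 • φ + t2 • ψ) i = t1 * φ (gi i) + t2 * ψ (gi i) := rfl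
      have e2 : (t1 • Gm φ + t2 • Gm ψ) i = t1 * Gm φ i + t2 * Gm ψ i := by
        simp [PiLp.add_apply, PiLp.smul_apply, smul_eq_mul]
      rw [e1, e2, hGapply, hGapply]
  · rw [hset]
    exact hKcpt.image hGcont
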